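/- For every integer n ≥ 1 and every z ∈ ℂ with z ≠ 0, the functions P_n(z) = ψ_{2n}(z;1) + (1 + a_{2n−1})·ψ_{2n−1}(z;1) and χ_n(z) = −ψ_{2n}(z;1) + (1 − a_{2n−1})·ψ_{2n−1}(z;1) (which equal the Jacobi polynomial of the first kind in x = z + 1/z and (z − 1/z) times the Jacobi polynomial of the second kind, respectively) satisfy the derivative relation z·P_n′(z) = n·χ_n(z). -/

import Mathlib

open Finset

/-- Monic OPUC associated to a sequence of (real) Verblunsky parameters. -/
noncomputable def Phi (c : ℕ → ℝ) : ℕ → ℂ → ℂ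
  | 0, _ => 1
  | n + 1, z => z * Phi c n z - (c n : ℂ) * z ^ n * Phi c n z⁻¹

/-- CMV Laurent polynomials: ψ_{2m} z = z^m Φ_{2m}(1/z), ψ_{2m+1} z = z^{-m} Φ_{2m+1}(z). -/
noncomputable def psi (c : ℕ → ℝ) (n : ℕ) (z : ℂ) : ℂ :=
  if Even n then z ^ (n / 2) * Phi c n z⁻¹
  else z ^ (-((n / 2 : ℕ) : ℤ)) * Phi c n z

/-- Verblunsky parameters of the Jacobi OPUC. -/
noncomputable def jacobiA (α β : ℝ) (n : ℕ) : ℝ :=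
  -(α + 1 / 2 + (-1 : ℝ) ^ (n + 1) * (β + 1 / 2)) / (n + α + β + 2)

/-- Sieved Verblunsky parameters: a_n(N) = a_{k-1} if n = N k - 1 (k ≥ 1), 0 otherwise. -/
noncomputable def sievedA (α β : ℝ) (N n : ℕ) : ℝ :=
  if N ∣ (n + 1) then jacobiA α β ((n + 1) / N - 1) else 0

/-- The primitive N-th root of unity q = exp(2πi/N). -/
noncomputable def qN (N : ℕ) : ℂ := Complex.exp (2 * Real.pi * Complex.I / N)

/-- The coefficients A_k(z;N) of the Dunkl-type operator L(N). -/
noncomputable def Acoef (α β : ℝ) (N k : ℕ) (z : ℂ) : ℂ :=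
  if Even N then
    ((α : ℂ) + β + 1 + (-1 : ℂ) ^ k * ((α : ℂ) - β)) * z ^ 2 / (qN N ^ k - z ^ 2)
  else
    (((α : ℂ) + β + 1) * z ^ 2 +
        (if Even k then qN N ^ ((k : ℤ) / 2) else qN N ^ (((k : ℤ) - (N : ℤ)) / 2)) *
          ((α : ℂ) - β) * z) /
      (qN N ^ k - z ^ 2)

/-- B(z) = N((α+β+1) z^{2N} + (α-β) z^N)/(z^{2N} - 1). -/
noncomputable def Bfun (α β : ℝ) (N : ℕ) (z : ℂ) : ℂ :=
  (N : ℂ) * (((α : ℂ) + β + 1) * z ^ (2 * N) + ((α : ℂ) - β) * z ^ N) / (z ^ (2 * N) - 1)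

/-- The Dunkl-type operator L(N). -/
noncomputable def Lop (α β : ℝ) (N : ℕ) (f : ℂ → ℂ) : ℂ → ℂ := fun z =>
  z * deriv f z + ∑ k ∈ Finset.range N, Acoef α β N k z * (f (qN N ^ k / z) - f z)

/-- A function ℂ∖{0} → ℂ is a Laurent polynomial. -/
def IsLaurentPoly (f : ℂ → ℂ) : Prop :=
  ∃ (m : ℕ) (p : Polynomial ℂ), ∀ z : ℂ, z ≠ 0 → f z = Polynomial.eval z p / z ^ m

/-- Sieved Jacobi polynomial of the first kind, as a function of z (x = z + 1/z). -/
noncomputable def sievP (α β : ℝ) (N n : ℕ) (z : ℂ) : ℂ :=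
  psi (sievedA α β N) (2 * n) z
    + (1 + (sievedA α β N (2 * n - 1) : ℂ)) * psi (sievedA α β N) (2 * n - 1) z

/-- χ_n(z) = (z - 1/z) Q_{n-1}(x(z)), with Q the sieved Jacobi polynomial of 2nd kind. -/
noncomputable def sievChi (α β : ℝ) (N n : ℕ) (z : ℂ) : ℂ :=
  -psi (sievedA α β N) (2 * n) z
    + (1 - (sievedA α β N (2 * n - 1) : ℂ)) * psi (sievedA α β N) (2 * n - 1) z

/-! With `u = ψ_{2m+1}` one has `P_{m+1}(z) = u(z) + u(1/z)` and `χ_{m+1}(z) = u(z) - u(1/z)`, and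
two steps of the Szegő recursion express `z P_{m+2}` and `z χ_{m+2}` through `P_{m+1}` and
`χ_{m+1}` with quadratic coefficients. The relation `z P_n' = n χ_n` is proved by induction on `n`
together with the companion relation
`(1 - z²) z χ_n' = 2 (A z² + B z) χ_n + (1 - z²) ((n + A) P_n + A χ_n)`, `A = α + β + 1`,
`B = α - β`. Differentiating the recursion turns the induction step into polynomial identities,
which hold because `a_{2m+1} (2m + 2 + A) = -A` and `a_{2m} (2m + 1 + A) = -B`. -/

open Filter Topology

theorem add_mul_deriv_eq_of_mul_eventuallyEq {𝕜 : Type*} [NontriviallyNormedField 𝕜]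
    {f g : 𝕜 → 𝕜} {z g' : 𝕜} (hf : DifferentiableAt 𝕜 f z) (hg : HasDerivAt g g' z)
    (h : (fun w => w * f w) =ᶠ[𝓝 z] g) : f z + z * deriv f z = g' := by
  have := (hg.congr_of_eventuallyEq h).unique ((hasDerivAt_id z).mul hf.hasDerivAt)
  simpa using this.symm

section OPUC

variable (c : ℕ → ℝ)

theorem Phi_succ (n : ℕ) (z : ℂ) :
    Phi c (n + 1) z = z * Phi c n z - c n * z ^ n * Phi c n z⁻¹ := rfl

theorem differentiableAt_Phi (n : ℕ) {z : ℂ} (hz : z ≠ 0) : DifferentiableAt ℂ (Phi c n) z := by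
  induction n generalizing z with
  | zero => exact differentiableAt_const 1
  | succ n ih =>
    have hinv : DifferentiableAt ℂ (fun w : ℂ => Phi c n w⁻¹) z :=
      (ih (inv_ne_zero hz)).comp z (differentiableAt_inv hz)
    exact (differentiableAt_id.mul (ih hz)).sub
      (((differentiableAt_const _).mul (differentiableAt_pow n)).mul hinv)

theorem differentiableAt_psi (n : ℕ) {z : ℂ} (hz : z ≠ 0) : DifferentiableAt ℂ (psi c n) z := by
  unfold psi
  split_ifs
  · exact (differentiableAt_pow _).mul
      ((differentiableAt_Phi c n (inv_ne_zero hz)).comp z (differentiableAt_inv hz))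
  · exact (differentiableAt_zpow.mpr (Or.inl hz)).mul (differentiableAt_Phi c n hz)

theorem psi_two_mul_add_one (m : ℕ) (z : ℂ) :
    psi c (2 * m + 1) z = (z ^ m)⁻¹ * Phi c (2 * m + 1) z := by
  have hodd : ¬ Even (2 * m + 1) := by simp
  simp only [psi, if_neg hodd, show (2 * m + 1) / 2 = m by omega, zpow_neg, zpow_natCast]

theorem psi_one (z : ℂ) : psi c 1 z = z - c 0 := by
  simpa [Phi] using psi_two_mul_add_one c 0 z

theorem psi_two_mul_add_two (m : ℕ) {z : ℂ} (hz : z ≠ 0) :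
    psi c (2 * m + 2) z = psi c (2 * m + 1) z⁻¹ - c (2 * m + 1) * psi c (2 * m + 1) z := by
  have heven : Even (2 * m + 2) := ⟨m + 1, by ring⟩
  rw [psi_two_mul_add_one, psi_two_mul_add_one, psi, if_pos heven,
    show (2 * m + 2) / 2 = m + 1 by omega, Phi_succ]
  simp only [inv_pow, inv_inv]
  field_simp
  ring

theorem psi_two_mul_add_three (m : ℕ) {z : ℂ} (hz : z ≠ 0) :
    psi c (2 * m + 3) z
      = (z + c (2 * m + 1) * c (2 * m + 2)) * psi c (2 * m + 1) z
        - (c (2 * m + 1) * z + c (2 * m + 2)) * psi c (2 * m + 1) z⁻¹ := by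
  rw [show 2 * m + 3 = 2 * (m + 1) + 1 by ring, psi_two_mul_add_one, psi_two_mul_add_one,
    psi_two_mul_add_one, show 2 * (m + 1) + 1 = 2 * m + 1 + 1 + 1 by ring,
    Phi_succ c (2 * m + 1 + 1) z, Phi_succ c (2 * m + 1) z, Phi_succ c (2 * m + 1) z⁻¹]
  simp only [inv_pow, inv_inv]
  field_simp
  ring

-- `cmvP c m` and `cmvChi c m` are the paper's `P_{m+1}` and `χ_{m+1}`: the shift of index
-- avoids the truncated subtraction in `2 * n - 1`.
noncomputable def cmvP (m : ℕ) (z : ℂ) : ℂ :=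
  psi c (2 * m + 2) z + (1 + (c (2 * m + 1) : ℂ)) * psi c (2 * m + 1) z

noncomputable def cmvChi (m : ℕ) (z : ℂ) : ℂ :=
  -psi c (2 * m + 2) z + (1 - (c (2 * m + 1) : ℂ)) * psi c (2 * m + 1) z

theorem differentiableAt_cmvP (m : ℕ) {z : ℂ} (hz : z ≠ 0) : DifferentiableAt ℂ (cmvP c m) z :=
  (differentiableAt_psi c _ hz).add ((differentiableAt_psi c _ hz).const_mul _)

theorem differentiableAt_cmvChi (m : ℕ) {z : ℂ} (hz : z ≠ 0) :
    DifferentiableAt ℂ (cmvChi c m) z :=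
  (differentiableAt_psi c _ hz).neg.add ((differentiableAt_psi c _ hz).const_mul _)

theorem cmvP_eq (m : ℕ) {z : ℂ} (hz : z ≠ 0) :
    cmvP c m z = psi c (2 * m + 1) z + psi c (2 * m + 1) z⁻¹ := by
  rw [cmvP, psi_two_mul_add_two c m hz]
  ring

theorem cmvChi_eq (m : ℕ) {z : ℂ} (hz : z ≠ 0) :
    cmvChi c m z = psi c (2 * m + 1) z - psi c (2 * m + 1) z⁻¹ := by
  rw [cmvChi, psi_two_mul_add_two c m hz]
  ring

theorem mul_cmvP_zero {z : ℂ} (hz : z ≠ 0) : z * cmvP c 0 z = z ^ 2 - 2 * c 0 * z + 1 := by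
  rw [cmvP_eq c 0 hz, Nat.mul_zero, psi_one, psi_one]
  field_simp
  ring

theorem mul_cmvChi_zero {z : ℂ} (hz : z ≠ 0) : z * cmvChi c 0 z = z ^ 2 - 1 := by
  rw [cmvChi_eq c 0 hz, Nat.mul_zero, psi_one, psi_one]
  field_simp
  ring

theorem mul_cmvP_succ (m : ℕ) {z : ℂ} (hz : z ≠ 0) :
    z * cmvP c (m + 1) z
      = ((1 - c (2 * m + 1)) * (z ^ 2 - 2 * c (2 * m + 2) * z + 1) * cmvP c m z
        + (1 + c (2 * m + 1)) * (z ^ 2 - 1) * cmvChi c m z) / 2 := by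
  rw [cmvP_eq c (m + 1) hz, cmvP_eq c m hz, cmvChi_eq c m hz,
    show 2 * (m + 1) + 1 = 2 * m + 3 by ring, psi_two_mul_add_three c m hz,
    psi_two_mul_add_three c m (inv_ne_zero hz), inv_inv]
  field_simp
  ring

theorem mul_cmvChi_succ (m : ℕ) {z : ℂ} (hz : z ≠ 0) :
    z * cmvChi c (m + 1) z
      = ((1 - c (2 * m + 1)) * (z ^ 2 - 1) * cmvP c m z
        + (1 + c (2 * m + 1)) * (z ^ 2 + 2 * c (2 * m + 2) * z + 1) * cmvChi c m z) / 2 := by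
  rw [cmvChi_eq c (m + 1) hz, cmvP_eq c m hz, cmvChi_eq c m hz,
    show 2 * (m + 1) + 1 = 2 * m + 3 by ring, psi_two_mul_add_three c m hz,
    psi_two_mul_add_three c m (inv_ne_zero hz), inv_inv]
  field_simp
  ring

theorem cmvP_succ_add_mul_deriv (m : ℕ) {z : ℂ} (hz : z ≠ 0) :
    cmvP c (m + 1) z + z * deriv (cmvP c (m + 1)) z
      = ((1 - c (2 * m + 1)) * ((2 * z - 2 * c (2 * m + 2)) * cmvP c m z
          + (z ^ 2 - 2 * c (2 * m + 2) * z + 1) * deriv (cmvP c m) z)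
        + (1 + c (2 * m + 1)) * (2 * z * cmvChi c m z
          + (z ^ 2 - 1) * deriv (cmvChi c m) z)) / 2 := by
  refine add_mul_deriv_eq_of_mul_eventuallyEq (differentiableAt_cmvP c (m + 1) hz) ?_
    ((eventually_ne_nhds hz).mono fun w hw => mul_cmvP_succ c m hw)
  set a : ℂ := (c (2 * m + 1) : ℂ)
  set b : ℂ := (c (2 * m + 2) : ℂ)
  have hq₁ : HasDerivAt (fun w : ℂ => (1 - a) * (w ^ 2 - 2 * b * w + 1))
      ((1 - a) * (2 * z - 2 * b)) z := by
    simpa using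
      (((hasDerivAt_pow 2 z).sub ((hasDerivAt_id' z).const_mul (2 * b))).add_const 1).const_mul
        (1 - a)
  have hq₂ : HasDerivAt (fun w : ℂ => (1 + a) * (w ^ 2 - 1)) ((1 + a) * (2 * z)) z := by
    simpa using ((hasDerivAt_pow 2 z).sub_const 1).const_mul (1 + a)
  refine (((hq₁.mul (differentiableAt_cmvP c m hz).hasDerivAt).add
    (hq₂.mul (differentiableAt_cmvChi c m hz).hasDerivAt)).div_const 2).congr_deriv ?_
  ring

theorem cmvChi_succ_add_mul_deriv (m : ℕ) {z : ℂ} (hz : z ≠ 0) :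
    cmvChi c (m + 1) z + z * deriv (cmvChi c (m + 1)) z
      = ((1 - c (2 * m + 1)) * (2 * z * cmvP c m z + (z ^ 2 - 1) * deriv (cmvP c m) z)
        + (1 + c (2 * m + 1)) * ((2 * z + 2 * c (2 * m + 2)) * cmvChi c m z
          + (z ^ 2 + 2 * c (2 * m + 2) * z + 1) * deriv (cmvChi c m) z)) / 2 := by
  refine add_mul_deriv_eq_of_mul_eventuallyEq (differentiableAt_cmvChi c (m + 1) hz) ?_
    ((eventually_ne_nhds hz).mono fun w hw => mul_cmvChi_succ c m hw)
  set a : ℂ := (c (2 * m + 1) : ℂ)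
  set b : ℂ := (c (2 * m + 2) : ℂ)
  have hq₁ : HasDerivAt (fun w : ℂ => (1 - a) * (w ^ 2 - 1)) ((1 - a) * (2 * z)) z := by
    simpa using ((hasDerivAt_pow 2 z).sub_const 1).const_mul (1 - a)
  have hq₂ : HasDerivAt (fun w : ℂ => (1 + a) * (w ^ 2 + 2 * b * w + 1))
      ((1 + a) * (2 * z + 2 * b)) z := by
    simpa using
      (((hasDerivAt_pow 2 z).add ((hasDerivAt_id' z).const_mul (2 * b))).add_const 1).const_mul
        (1 + a)
  refine (((hq₁.mul (differentiableAt_cmvP c m hz).hasDerivAt).add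
    (hq₂.mul (differentiableAt_cmvChi c m hz).hasDerivAt)).div_const 2).congr_deriv ?_
  ring

end OPUC

theorem jacobiA_mul {α β : ℝ} (hαβ : -2 < α + β) (n : ℕ) :
    jacobiA α β n * (n + α + β + 2) = -(α + 1 / 2 + (-1) ^ (n + 1) * (β + 1 / 2)) :=
  div_mul_cancel₀ _ (by linarith [n.cast_nonneg (α := ℝ)] : (0 : ℝ) < n + α + β + 2).ne'

theorem jacobiA_two_mul_add_one_mul {α β : ℝ} (hαβ : -2 < α + β) (m : ℕ) :
    (jacobiA α β (2 * m + 1) : ℂ) * (2 * (m + 1) + (α + β + 1)) = -(α + β + 1) := by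
  have h := jacobiA_mul hαβ (2 * m + 1)
  rw [Even.neg_one_pow ⟨m + 1, by ring⟩] at h
  push_cast at h
  exact_mod_cast (by linear_combination h :
    jacobiA α β (2 * m + 1) * (2 * (m + 1) + (α + β + 1)) = -(α + β + 1))

theorem jacobiA_two_mul_mul {α β : ℝ} (hαβ : -2 < α + β) (m : ℕ) :
    (jacobiA α β (2 * m) : ℂ) * (2 * m + 1 + (α + β + 1)) = -(α - β) := by
  have h := jacobiA_mul hαβ (2 * m)
  rw [Odd.neg_one_pow ⟨m, rfl⟩] at h
  push_cast at h
  exact_mod_cast (by linear_combination h :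
    jacobiA α β (2 * m) * (2 * m + 1 + (α + β + 1)) = -(α - β))

theorem jacobiA_two_mul_add_two_mul {α β : ℝ} (hαβ : -2 < α + β) (m : ℕ) :
    (jacobiA α β (2 * m + 2) : ℂ) * (2 * (m + 1) + 1 + jacobiA α β (2 * m + 1))
      = -(1 + jacobiA α β (2 * m + 1)) * (α - β) := by
  have ha := jacobiA_two_mul_add_one_mul hαβ m
  have hb := jacobiA_two_mul_mul hαβ (m + 1)
  rw [show 2 * (m + 1) = 2 * m + 2 by ring] at hb
  push_cast at hb
  have hD : 2 * ((m : ℂ) + 1) + (α + β + 1) ≠ 0 := by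
    have : (0 : ℝ) < 2 * (m + 1) + (α + β + 1) := by linarith [m.cast_nonneg (α := ℝ)]
    exact_mod_cast this.ne'
  apply mul_left_cancel₀ hD
  linear_combination (jacobiA α β (2 * m + 2) + (α - β : ℂ)) * ha + 2 * ((m : ℂ) + 1) * hb

def JacobiDerivRelations (α β : ℝ) (m : ℕ) (z : ℂ) : Prop :=
  z * deriv (cmvP (jacobiA α β) m) z = (m + 1) * cmvChi (jacobiA α β) m z ∧
    (1 - z ^ 2) * (z * deriv (cmvChi (jacobiA α β) m) z)
      = 2 * ((α + β + 1) * z ^ 2 + (α - β) * z) * cmvChi (jacobiA α β) m z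
        + (1 - z ^ 2) * ((m + 1 + (α + β + 1)) * cmvP (jacobiA α β) m z
          + (α + β + 1) * cmvChi (jacobiA α β) m z)

theorem jacobiDerivRelations_zero {α β : ℝ} (hαβ : -2 < α + β) {z : ℂ} (hz : z ≠ 0) :
    JacobiDerivRelations α β 0 z := by
  have hc := jacobiA_two_mul_mul hαβ 0
  push_cast at hc
  have hrecP := mul_cmvP_zero (jacobiA α β) hz
  have hrecχ := mul_cmvChi_zero (jacobiA α β) hz
  set c₀ : ℂ := (jacobiA α β 0 : ℂ)
  have hderP : cmvP (jacobiA α β) 0 z + z * deriv (cmvP (jacobiA α β) 0) z = 2 * z - 2 * c₀ :=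
    add_mul_deriv_eq_of_mul_eventuallyEq (differentiableAt_cmvP _ 0 hz)
      (by simpa using
        ((hasDerivAt_pow 2 z).sub ((hasDerivAt_id' z).const_mul (2 * c₀))).add_const 1)
      ((eventually_ne_nhds hz).mono fun w hw => mul_cmvP_zero (jacobiA α β) hw)
  have hderχ : cmvChi (jacobiA α β) 0 z + z * deriv (cmvChi (jacobiA α β) 0) z = 2 * z :=
    add_mul_deriv_eq_of_mul_eventuallyEq (differentiableAt_cmvChi _ 0 hz)
      (by simpa using (hasDerivAt_pow 2 z).sub_const 1)
      ((eventually_ne_nhds hz).mono fun w hw => mul_cmvChi_zero (jacobiA α β) hw)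
  constructor
  · apply mul_left_cancel₀ hz
    push_cast
    linear_combination z * hderP - hrecP - hrecχ
  · apply mul_left_cancel₀ hz
    push_cast
    linear_combination z * (1 - z ^ 2) * hderχ - (1 - z ^ 2) * hrecχ
      - (2 * ((α + β + 1) * z ^ 2 + (α - β) * z) + (1 - z ^ 2) * (α + β + 1)) * hrecχ
      - (1 - z ^ 2) * (1 + (α + β + 1)) * hrecP + 2 * z * (1 - z ^ 2) * hc

theorem JacobiDerivRelations.succ {α β : ℝ} (hαβ : -2 < α + β) {m : ℕ} {z : ℂ} (hz : z ≠ 0)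
    (ih : JacobiDerivRelations α β m z) : JacobiDerivRelations α β (m + 1) z := by
  obtain ⟨hP, hχ⟩ := ih
  have ha := jacobiA_two_mul_add_one_mul hαβ m
  have hb := jacobiA_two_mul_mul hαβ (m + 1)
  have hab := jacobiA_two_mul_add_two_mul hαβ m
  rw [show 2 * (m + 1) = 2 * m + 2 by ring] at hb
  have hrecP := mul_cmvP_succ (jacobiA α β) m hz
  have hrecχ := mul_cmvChi_succ (jacobiA α β) m hz
  have hderP := cmvP_succ_add_mul_deriv (jacobiA α β) m hz
  have hderχ := cmvChi_succ_add_mul_deriv (jacobiA α β) m hz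
  unfold JacobiDerivRelations
  push_cast at hb hab ⊢
  set a : ℂ := (jacobiA α β (2 * m + 1) : ℂ)
  set b : ℂ := (jacobiA α β (2 * m + 2) : ℂ)
  set A₁ : ℂ := (α : ℂ) + β + 1
  set A₂ : ℂ := (α : ℂ) - β
  set N : ℂ := (m : ℂ) + 1
  set P := cmvP (jacobiA α β) m z
  set X := cmvChi (jacobiA α β) m z
  constructor
  · apply mul_left_cancel₀ hz
    linear_combination z * hderP - hrecP - (N + 1) * hrecχ
      + (1 - a) * (z ^ 2 - 2 * b * z + 1) / 2 * hP - (1 + a) / 2 * hχ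
      - ((1 - z ^ 2) * P + (z ^ 2 + 1) * X) / 2 * ha - z * X * hab
  · apply mul_left_cancel₀ hz
    linear_combination z * (1 - z ^ 2) * hderχ - (1 - z ^ 2) * hrecχ
      - (2 * (A₁ * z ^ 2 + A₂ * z) + (1 - z ^ 2) * A₁) * hrecχ - (1 - z ^ 2) * (N + 1 + A₁) * hrecP
      + (1 - z ^ 2) * (1 - a) * (z ^ 2 - 1) / 2 * hP + (1 + a) * (z ^ 2 + 2 * b * z + 1) / 2 * hχ
      + (P * (1 - z ^ 2) * (z ^ 2 + 1 + 4 * b * z) + X * (1 - z ^ 2) ^ 2) / 2 * ha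
      + P * (1 - z ^ 2) * z * hab - 2 * a * z * P * (1 - z ^ 2) * hb

theorem jacobiDerivRelations {α β : ℝ} (hαβ : -2 < α + β) (m : ℕ) {z : ℂ} (hz : z ≠ 0) :
    JacobiDerivRelations α β m z := by
  induction m with
  | zero => exact jacobiDerivRelations_zero hαβ hz
  | succ m ih => exact ih.succ hαβ hz

/-- the derivative relation z P_n'(z) = n χ_n(z) between the Jacobi
polynomials of the first kind and (z - 1/z) times those of the second kind. -/
theorem stmt_19 (α β : ℝ) (hα : -1 < α) (hβ : -1 < β) (n : ℕ) (hn : 1 ≤ n)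
    (z : ℂ) (hz : z ≠ 0) :
    z * deriv (fun w => psi (jacobiA α β) (2 * n) w
        + (1 + (jacobiA α β (2 * n - 1) : ℂ)) * psi (jacobiA α β) (2 * n - 1) w) z
      = (n : ℂ) * (-psi (jacobiA α β) (2 * n) z
          + (1 - (jacobiA α β (2 * n - 1) : ℂ)) * psi (jacobiA α β) (2 * n - 1) z) := by
  obtain ⟨m, rfl⟩ : ∃ m, n = m + 1 := ⟨n - 1, by omega⟩
  rw [show 2 * (m + 1) - 1 = 2 * m + 1 by omega, show 2 * (m + 1) = 2 * m + 2 by ring]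
  push_cast
  exact (jacobiDerivRelations (by linarith) m hz).1
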